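/- Let 0 < τ ≤ 1 and let (S, I, P) be a nonnegative classical solution of the τ-parametrized elliptic system (4.8) on Ω, i.e., S, I, P are twice continuously differentiable in Ω, continuous on Ω̄, nonnegative in Ω, vanish on ∂Ω, and satisfy −dΔS = τ[a(S+I) − bS − c(S+I)S − kSI − ℓSP], −dΔI = τ[kSI − bI − c(S+I)I − ℓIP], −DΔP = τ[θ(S+I)P − ρP] in Ω. Then sup_{Ω̄} (S + I) ≤ (a−b)/c and sup_{Ω̄} P ≤ dθ(a−b)/(cDℓ) + θ(a−b)²/(4cℓρ). -/

import Mathlib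

open Set

noncomputable def vlap {N : ℕ} (f : EuclideanSpace ℝ (Fin N) → ℝ)
    (x : EuclideanSpace ℝ (Fin N)) : ℝ :=
  ∑ i : Fin N, fderiv ℝ (fun y => fderiv ℝ f y (EuclideanSpace.single i 1)) x
    (EuclideanSpace.single i 1)

/-- `f` is twice continuously differentiable in `Ω`, continuous on `closure Ω`,
strictly positive in `Ω` and vanishes on the boundary `frontier Ω`. -/
def PosDirichlet {N : ℕ} (Ω : Set (EuclideanSpace ℝ (Fin N)))
    (f : EuclideanSpace ℝ (Fin N) → ℝ) : Prop :=
  ContDiffOn ℝ 2 f Ω ∧ ContinuousOn f (closure Ω) ∧ (∀ x ∈ Ω, 0 < f x) ∧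
    ∀ x ∈ frontier Ω, f x = 0

/-!
At a maximum point of a `C²` function every second directional derivative, hence the
Laplacian, is nonpositive. Adding the equations for `S` and `I` gives
`-dΔ(S + I) = τ((a - b)u - cu² - ℓuP)` with `u = S + I`, so at a maximum point of `u` in `Ω`
we get `cu ≤ a - b`; on the boundary `u = 0`. For `P` one maximizes instead
`φ = (dθ / (Dℓ)) u + P`, for which the cross terms `ℓuP` cancel:
`-DℓΔφ = τ(θ((a - b)u - cu²) - ℓρP)`. At a maximum point of `φ` this bounds `P` by
`θ(a - b)² / (4cℓρ)` (the maximum of the parabola) and `u` by the first part, and `P ≤ φ`.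
-/

open Filter Topology

lemma deriv_deriv_nonpos_of_isLocalMax {g : ℝ → ℝ} {t : ℝ} (hmax : IsLocalMax g t)
    (hg : ContinuousAt g t) : deriv (deriv g) t ≤ 0 := by
  by_contra! hpos
  -- the second derivative test would make `t` also a local minimum, so `g` is locally constant
  have hconst : g =ᶠ[𝓝 t] fun _ => g t :=
    ((isLocalMin_of_deriv_deriv_pos hpos hmax.deriv_eq_zero hg).and hmax).mono
      fun s hs => le_antisymm hs.2 hs.1
  have hderiv : deriv g =ᶠ[𝓝 t] fun _ => 0 :=
    hconst.eventuallyEq_nhds.mono fun s hs => by rw [hs.deriv_eq, deriv_const]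
  rw [hderiv.deriv_eq, deriv_const] at hpos
  exact hpos.false

section
variable {E : Type*} [NormedAddCommGroup E] [NormedSpace ℝ E] {f g : E → ℝ} {x : E}

lemma ContDiffAt.differentiableAt_fderiv_apply (hf : ContDiffAt ℝ 2 f x) (v : E) :
    DifferentiableAt ℝ (fun y => fderiv ℝ f y v) x :=
  ((hf.fderiv_right (m := 1) le_rfl).differentiableAt one_ne_zero).clm_apply
    (differentiableAt_const v)

lemma fderiv_fderiv_apply_nonpos_of_isLocalMax (hf : ContDiffAt ℝ 2 f x)
    (hmax : IsLocalMax f x) (v : E) : fderiv ℝ (fun y => fderiv ℝ f y v) x v ≤ 0 := by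
  set line : ℝ → E := fun t => x + t • v
  have hline : ∀ t, HasDerivAt line v t := fun t =>
    (((hasDerivAt_id t).smul_const v).const_add x).congr_deriv (one_smul ℝ v)
  have hline0 : line 0 = x := by simp [line]
  rw [← hline0] at hf hmax ⊢
  have hdiff : ∀ᶠ t in 𝓝 (0 : ℝ), DifferentiableAt ℝ f (line t) :=
    (hline 0).continuousAt.eventually
      ((hf.eventually (by simp)).mono fun y hy => hy.differentiableAt (by norm_num))
  have hfirst : deriv (f ∘ line) =ᶠ[𝓝 0] fun t => fderiv ℝ f (line t) v :=
    hdiff.eventually_nhds.mono fun t ht =>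
      (ht.self_of_nhds.hasFDerivAt.comp_hasDerivAt t (hline t)).deriv
  have hsecond : HasDerivAt (fun t => fderiv ℝ f (line t) v)
      (fderiv ℝ (fun y => fderiv ℝ f y v) (line 0) v) 0 :=
    (hf.differentiableAt_fderiv_apply v).hasFDerivAt.comp_hasDerivAt 0 (hline 0)
  have h := deriv_deriv_nonpos_of_isLocalMax (hmax.comp_continuous (hline 0).continuousAt)
    (hf.continuousAt.comp (hline 0).continuousAt)
  rwa [hfirst.deriv_eq, hsecond.deriv] at h

lemma fderiv_fderiv_apply_add (hf : ContDiffAt ℝ 2 f x) (hg : ContDiffAt ℝ 2 g x) (v w : E) :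
    fderiv ℝ (fun y => fderiv ℝ (fun z => f z + g z) y v) x w
      = fderiv ℝ (fun y => fderiv ℝ f y v) x w + fderiv ℝ (fun y => fderiv ℝ g y v) x w := by
  have hinner : (fun y => fderiv ℝ (fun z => f z + g z) y v)
      =ᶠ[𝓝 x] fun y => fderiv ℝ f y v + fderiv ℝ g y v := by
    filter_upwards [hf.eventually (by simp), hg.eventually (by simp)] with y hfy hgy
    rw [fderiv_fun_add (hfy.differentiableAt (by norm_num)) (hgy.differentiableAt (by norm_num))]
    rfl
  rw [hinner.fderiv_eq, fderiv_fun_add (hf.differentiableAt_fderiv_apply v)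
    (hg.differentiableAt_fderiv_apply v)]
  rfl

lemma fderiv_fderiv_apply_const_mul (hf : ContDiffAt ℝ 2 f x) (p : ℝ) (v w : E) :
    fderiv ℝ (fun y => fderiv ℝ (fun z => p * f z) y v) x w
      = p * fderiv ℝ (fun y => fderiv ℝ f y v) x w := by
  have hinner : (fun y => fderiv ℝ (fun z => p * f z) y v)
      =ᶠ[𝓝 x] fun y => p * fderiv ℝ f y v := by
    filter_upwards [hf.eventually (by simp)] with y hfy
    rw [fderiv_const_mul (hfy.differentiableAt (by norm_num))]
    rfl
  rw [hinner.fderiv_eq, fderiv_const_mul (hf.differentiableAt_fderiv_apply v)]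
  rfl

end

section
variable {N : ℕ} {f g : EuclideanSpace ℝ (Fin N) → ℝ} {x : EuclideanSpace ℝ (Fin N)}

lemma vlap_nonpos_of_isLocalMax (hf : ContDiffAt ℝ 2 f x) (hmax : IsLocalMax f x) :
    vlap f x ≤ 0 :=
  Finset.sum_nonpos fun _ _ => fderiv_fderiv_apply_nonpos_of_isLocalMax hf hmax _

lemma vlap_add (hf : ContDiffAt ℝ 2 f x) (hg : ContDiffAt ℝ 2 g x) :
    vlap (fun y => f y + g y) x = vlap f x + vlap g x := by
  simp only [vlap, fderiv_fderiv_apply_add hf hg, Finset.sum_add_distrib]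

lemma vlap_const_mul (hf : ContDiffAt ℝ 2 f x) (p : ℝ) :
    vlap (fun y => p * f y) x = p * vlap f x := by
  simp only [vlap, fderiv_fderiv_apply_const_mul hf, Finset.mul_sum]

lemma le_of_forall_mem_frontier_le_of_vlap_nonpos {Ω : Set (EuclideanSpace ℝ (Fin N))}
    {M : ℝ} (hΩ : IsOpen Ω) (hΩbd : Bornology.IsBounded Ω) (hreg : ContDiffOn ℝ 2 f Ω)
    (hcont : ContinuousOn f (closure Ω)) (hfrontier : ∀ y ∈ frontier Ω, f y ≤ M)
    (hinterior : ∀ y ∈ Ω, vlap f y ≤ 0 → f y ≤ M) (hx : x ∈ closure Ω) : f x ≤ M := by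
  obtain ⟨x₀, hx₀, hmax⟩ := hΩbd.isCompact_closure.exists_isMaxOn ⟨x, hx⟩ hcont
  refine (hmax hx).trans ?_
  rcases (closure_eq_self_union_frontier Ω ▸ hx₀ : x₀ ∈ Ω ∪ frontier Ω) with h | h
  · have hnhds : Ω ∈ 𝓝 x₀ := hΩ.mem_nhds h
    exact hinterior x₀ h <| vlap_nonpos_of_isLocalMax (hreg.contDiffAt hnhds)
      (hmax.isLocalMax (mem_of_superset hnhds subset_closure))
  · exact hfrontier x₀ h

end

lemma nonneg_of_mem_closure {X : Type*} [TopologicalSpace X] {s : Set X} {f : X → ℝ}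
    (hs : ∀ x ∈ s, 0 ≤ f x) (hfrontier : ∀ x ∈ frontier s, f x = 0) {x : X}
    (hx : x ∈ closure s) : 0 ≤ f x := by
  rcases (closure_eq_self_union_frontier s ▸ hx : x ∈ s ∪ frontier s) with h | h
  · exact hs x h
  · exact (hfrontier x h).ge

lemma prey_le_of_laplacian_nonpos {a b c k el d tau s i q ΔS ΔI : ℝ} (hc : 0 < c)
    (hel : 0 ≤ el) (hd : 0 ≤ d) (hab : b ≤ a) (htau : 0 < tau) (hs : 0 ≤ s) (hi : 0 ≤ i)
    (hq : 0 ≤ q)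
    (eS : -d * ΔS = tau * (a * (s + i) - b * s - c * (s + i) * s - k * s * i - el * s * q))
    (eI : -d * ΔI = tau * (k * s * i - b * i - c * (s + i) * i - el * i * q))
    (hΔ : ΔS + ΔI ≤ 0) : s + i ≤ (a - b) / c := by
  set u := s + i
  have hreaction : 0 ≤ (a - b) * u - c * u ^ 2 - el * u * q := by
    have h : -d * (ΔS + ΔI) = tau * ((a - b) * u - c * u ^ 2 - el * u * q) := by
      linear_combination eS + eI
    exact (mul_nonneg_iff_of_pos_left htau).mp
      (h ▸ mul_nonneg_of_nonpos_of_nonpos (neg_nonpos.mpr hd) hΔ)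
  have hu : 0 ≤ u := add_nonneg hs hi
  rw [le_div_iff₀ hc]
  nlinarith [mul_nonneg (mul_nonneg hel hu) hq]

lemma predator_le_of_laplacian_nonpos {a b c k el th rh d D tau s i q ΔS ΔI ΔP : ℝ}
    (hc : 0 < c) (hel : 0 < el) (hth : 0 ≤ th) (hrh : 0 < rh) (hd : 0 ≤ d) (hD : 0 < D)
    (htau : 0 < tau)
    (eS : -d * ΔS = tau * (a * (s + i) - b * s - c * (s + i) * s - k * s * i - el * s * q))
    (eI : -d * ΔI = tau * (k * s * i - b * i - c * (s + i) * i - el * i * q))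
    (eP : -D * ΔP = tau * (th * (s + i) * q - rh * q))
    (hΔ : d * th / (D * el) * (ΔS + ΔI) + ΔP ≤ 0) (hu : s + i ≤ (a - b) / c) :
    d * th / (D * el) * (s + i) + q
      ≤ d * th * (a - b) / (c * D * el) + th * (a - b) ^ 2 / (4 * c * el * rh) := by
  set u := s + i
  set p := d * th / (D * el)
  have hreaction : el * rh * q ≤ th * ((a - b) * u - c * u ^ 2) := by
    have hp : D * el * p = d * th := by simp only [p]; field_simp
    have h : -(D * el) * (p * (ΔS + ΔI) + ΔP)
        = tau * (th * ((a - b) * u - c * u ^ 2) - el * rh * q) := by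
      linear_combination th * eS + th * eI + el * eP - (ΔS + ΔI) * hp
    have := (mul_nonneg_iff_of_pos_left htau).mp
      (h ▸ mul_nonneg_of_nonpos_of_nonpos (neg_nonpos.mpr (mul_pos hD hel).le) hΔ)
    linarith
  have hparabola : 4 * c * ((a - b) * u - c * u ^ 2) ≤ (a - b) ^ 2 := by
    nlinarith [sq_nonneg (a - b - 2 * c * u)]
  have hq : q ≤ th * (a - b) ^ 2 / (4 * c * el * rh) := by
    rw [le_div_iff₀ (by positivity)]
    nlinarith [mul_le_mul_of_nonneg_left hparabola hth]
  have hpu : p * u ≤ d * th * (a - b) / (c * D * el) :=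
    calc p * u ≤ p * ((a - b) / c) := mul_le_mul_of_nonneg_left hu (by positivity)
      _ = d * th * (a - b) / (c * D * el) := by simp only [p]; field_simp
  linarith

theorem stmt17_general {N : ℕ} (Ω : Set (EuclideanSpace ℝ (Fin N)))
    (hΩopen : IsOpen Ω) (hΩbd : Bornology.IsBounded Ω)
    (a b c k el th rh d D : ℝ) (hc : 0 < c)
    (hel : 0 < el) (hth : 0 < th) (hrh : 0 < rh) (hd : 0 < d) (hD : 0 < D) (hab : b < a)
    (tau : ℝ) (htau0 : 0 < tau)
    (S I P : EuclideanSpace ℝ (Fin N) → ℝ)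
    (hSreg : ContDiffOn ℝ 2 S Ω) (hScont : ContinuousOn S (closure Ω))
    (hSpos : ∀ x ∈ Ω, 0 ≤ S x) (hSbd : ∀ x ∈ frontier Ω, S x = 0)
    (hIreg : ContDiffOn ℝ 2 I Ω) (hIcont : ContinuousOn I (closure Ω))
    (hIpos : ∀ x ∈ Ω, 0 ≤ I x) (hIbd : ∀ x ∈ frontier Ω, I x = 0)
    (hPreg : ContDiffOn ℝ 2 P Ω) (hPcont : ContinuousOn P (closure Ω))
    (hPpos : ∀ x ∈ Ω, 0 ≤ P x) (hPbd : ∀ x ∈ frontier Ω, P x = 0)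
    (heqS : ∀ x ∈ Ω, -d * vlap S x
      = tau * (a * (S x + I x) - b * S x - c * (S x + I x) * S x - k * S x * I x
          - el * S x * P x))
    (heqI : ∀ x ∈ Ω, -d * vlap I x
      = tau * (k * S x * I x - b * I x - c * (S x + I x) * I x - el * I x * P x))
    (heqP : ∀ x ∈ Ω, -D * vlap P x = tau * (th * (S x + I x) * P x - rh * P x)) :
    (∀ x ∈ closure Ω, S x + I x ≤ (a - b) / c) ∧
    (∀ x ∈ closure Ω, P x ≤ d * th * (a - b) / (c * D * el)
      + th * (a - b) ^ 2 / (4 * c * el * rh)) := by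
  have hat {f : EuclideanSpace ℝ (Fin N) → ℝ} (hf : ContDiffOn ℝ 2 f Ω) {x} (hx : x ∈ Ω) :
      ContDiffAt ℝ 2 f x :=
    hf.contDiffAt (hΩopen.mem_nhds hx)
  have hgap : 0 ≤ a - b := sub_nonneg.mpr hab.le
  have hprey : ∀ x ∈ closure Ω, S x + I x ≤ (a - b) / c := fun x =>
    le_of_forall_mem_frontier_le_of_vlap_nonpos hΩopen hΩbd (hSreg.add hIreg)
      (hScont.add hIcont)
      (fun y hy => by rw [hSbd y hy, hIbd y hy, add_zero]; exact div_nonneg hgap hc.le)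
      fun y hy hΔ => prey_le_of_laplacian_nonpos hc hel.le hd.le hab.le htau0 (hSpos y hy)
        (hIpos y hy) (hPpos y hy) (heqS y hy) (heqI y hy)
        (vlap_add (hat hSreg hy) (hat hIreg hy) ▸ hΔ)
  refine ⟨hprey, fun x hx => ?_⟩
  set p := d * th / (D * el)
  have hpredator : p * (S x + I x) + P x
      ≤ d * th * (a - b) / (c * D * el) + th * (a - b) ^ 2 / (4 * c * el * rh) := by
    refine le_of_forall_mem_frontier_le_of_vlap_nonpos (f := fun y => p * (S y + I y) + P y)
      hΩopen hΩbd ((contDiffOn_const.mul (hSreg.add hIreg)).add hPreg)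
      ((continuousOn_const.mul (hScont.add hIcont)).add hPcont) (fun y hy => ?_)
      (fun y hy hΔ => ?_) hx
    · rw [hSbd y hy, hIbd y hy, hPbd y hy, add_zero, add_zero, mul_zero]
      exact add_nonneg (div_nonneg (mul_nonneg (by positivity) hgap) (by positivity))
        (by positivity)
    · have hSI := (hat hSreg hy).add (hat hIreg hy)
      rw [vlap_add (contDiffAt_const.mul hSI) (hat hPreg hy), vlap_const_mul hSI,
        vlap_add (hat hSreg hy) (hat hIreg hy)] at hΔ
      exact predator_le_of_laplacian_nonpos hc hel hth.le hrh hd.le hD htau0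
        (heqS y hy) (heqI y hy) (heqP y hy) hΔ (hprey y (subset_closure hy))
  have hSI : 0 ≤ S x + I x :=
    add_nonneg (nonneg_of_mem_closure hSpos hSbd hx) (nonneg_of_mem_closure hIpos hIbd hx)
  linarith [mul_nonneg (by positivity : 0 ≤ p) hSI]

/-- A priori bounds for nonnegative classical solutions of the τ-parametrized elliptic
system (4.8): S + I ≤ (a-b)/c and P ≤ dθ(a-b)/(cDℓ) + θ(a-b)²/(4cℓρ) on Ω̄. -/
theorem stmt17 {N : ℕ} (hN : 1 ≤ N) (Ω : Set (EuclideanSpace ℝ (Fin N)))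
    (hΩopen : IsOpen Ω) (hΩconn : IsConnected Ω) (hΩbd : Bornology.IsBounded Ω)
    (a b c k el th rh d D : ℝ) (ha : 0 < a) (hb : 0 < b) (hc : 0 < c) (hk : 0 < k)
    (hel : 0 < el) (hth : 0 < th) (hrh : 0 < rh) (hd : 0 < d) (hD : 0 < D) (hab : b < a)
    (tau : ℝ) (htau0 : 0 < tau) (htau1 : tau ≤ 1)
    (S I P : EuclideanSpace ℝ (Fin N) → ℝ)
    (hSreg : ContDiffOn ℝ 2 S Ω) (hScont : ContinuousOn S (closure Ω))
    (hSpos : ∀ x ∈ Ω, 0 ≤ S x) (hSbd : ∀ x ∈ frontier Ω, S x = 0)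
    (hIreg : ContDiffOn ℝ 2 I Ω) (hIcont : ContinuousOn I (closure Ω))
    (hIpos : ∀ x ∈ Ω, 0 ≤ I x) (hIbd : ∀ x ∈ frontier Ω, I x = 0)
    (hPreg : ContDiffOn ℝ 2 P Ω) (hPcont : ContinuousOn P (closure Ω))
    (hPpos : ∀ x ∈ Ω, 0 ≤ P x) (hPbd : ∀ x ∈ frontier Ω, P x = 0)
    (heqS : ∀ x ∈ Ω, -d * vlap S x
      = tau * (a * (S x + I x) - b * S x - c * (S x + I x) * S x - k * S x * I x
          - el * S x * P x))
    (heqI : ∀ x ∈ Ω, -d * vlap I x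
      = tau * (k * S x * I x - b * I x - c * (S x + I x) * I x - el * I x * P x))
    (heqP : ∀ x ∈ Ω, -D * vlap P x = tau * (th * (S x + I x) * P x - rh * P x)) :
    (∀ x ∈ closure Ω, S x + I x ≤ (a - b) / c) ∧
    (∀ x ∈ closure Ω, P x ≤ d * th * (a - b) / (c * D * el)
      + th * (a - b) ^ 2 / (4 * c * el * rh)) :=
  stmt17_general Ω hΩopen hΩbd a b c k el th rh d D hc hel hth hrh hd hD hab tau htau0 S I P hSreg
    hScont hSpos hSbd hIreg hIcont hIpos hIbd hPreg hPcont hPpos hPbd heqS heqI heqP
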